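/- Let (V,ω) and (V̂,ω̂) be symplectic vector spaces, let L ⊆ V × V and L̂ ⊆ V̂ × V̂ be linear canonical relations with domains A, Â and ranges B, B̂ respectively, and let A₁, B₁ be subspaces with A = A^ω ⊕ A₁ and B = B^ω ⊕ B₁. Let φ_L : A₁ → B₁ be the induced linear symplectomorphism, characterized by: for (v₁,w₁) ∈ A₁ × B₁, (v₁,w₁) ∈ L if and only if w₁ = φ_L(v₁). Then a linear symplectomorphism S : V → V̂ is an equivalence between L and L̂ (i.e. (v,w) ∈ L ⟺ (Sv,Sw) ∈ L̂ for all v,w ∈ V) if and only if (i) S(A^ω) = Â^ω̂ and S(B^ω) = B̂^ω̂, and (ii) for every v₁ ∈ A₁, (S v₁, S(φ_L(v₁))) ∈ L̂. -/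

import Mathlib

/-!
A coisotropic relation `L` contains `A^ω × B^ω`, so every `(v, w) ∈ L` splits as an element of
`A^ω × B^ω` plus an element `(v₁, φ_L v₁)` of `L ∩ (A₁ × B₁)`. A symplectomorphism `S` satisfying
(i) and (ii) therefore maps `L` into `L̂`; since `L = L^ω̄` and `L̂` is isotropic, it then also
reflects membership. Conversely, an equivalence carries domain and range of `L` onto those of `L̂`,
and a symplectomorphism carries ω-orthogonals to ω̂-orthogonals.
-/

open Submodule Module

/-- The ω-orthogonal of a subspace: `W^ω = {v | ω(v,u) = 0 for all u ∈ W}`. -/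
def oOrtho {V : Type*} [AddCommGroup V] [Module ℝ V]
    (ω : V →ₗ[ℝ] V →ₗ[ℝ] ℝ) (W : Submodule ℝ V) : Submodule ℝ V where
  carrier := {v | ∀ u ∈ W, ω v u = 0}
  add_mem' := by
    intro a b ha hb u hu
    rw [Set.mem_setOf_eq] at *
    rw [map_add, LinearMap.add_apply, ha u hu, hb u hu, add_zero]
  zero_mem' := by intro u _; simp
  smul_mem' := by
    intro c a ha u hu
    rw [Set.mem_setOf_eq] at *
    rw [map_smul, LinearMap.smul_apply, ha u hu, smul_zero]

/-- The symplectic form `ω̄((v,v'),(u,u')) = ω(v,u) − ω(v',u')` on `V × V`. -/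
def prodForm {X Y : Type*} [AddCommGroup X] [Module ℝ X] [AddCommGroup Y] [Module ℝ Y]
    (ωX : X →ₗ[ℝ] X →ₗ[ℝ] ℝ) (ωY : Y →ₗ[ℝ] Y →ₗ[ℝ] ℝ) :
    (X × Y) →ₗ[ℝ] (X × Y) →ₗ[ℝ] ℝ :=
  LinearMap.mk₂ ℝ (fun p q => ωX p.1 q.1 - ωY p.2 q.2)
    (by intro m₁ m₂ n; simp [map_add, LinearMap.add_apply]; ring)
    (by intro c m n; simp [map_smul, LinearMap.smul_apply, smul_eq_mul]; ring)
    (by intro m n₁ n₂; simp [map_add, LinearMap.add_apply]; ring)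
    (by intro c m n; simp [map_smul, LinearMap.smul_apply, smul_eq_mul]; ring)

section CanonicalRelation

variable {X Y : Type*} [AddCommGroup X] [Module ℝ X] [AddCommGroup Y] [Module ℝ Y]

lemma mem_oOrtho_iff (ω : X →ₗ[ℝ] X →ₗ[ℝ] ℝ) (P : Submodule ℝ X) (v : X) :
    v ∈ oOrtho ω P ↔ ∀ u ∈ P, ω v u = 0 :=
  Iff.rfl

lemma prodForm_apply (ωX : X →ₗ[ℝ] X →ₗ[ℝ] ℝ) (ωY : Y →ₗ[ℝ] Y →ₗ[ℝ] ℝ) (p q : X × Y) :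
    prodForm ωX ωY p q = ωX p.1 q.1 - ωY p.2 q.2 :=
  rfl

lemma map_oOrtho (ω : X →ₗ[ℝ] X →ₗ[ℝ] ℝ) (ω' : Y →ₗ[ℝ] Y →ₗ[ℝ] ℝ) (S : X ≃ₗ[ℝ] Y)
    (hS : ∀ v u : X, ω' (S v) (S u) = ω v u) (P : Submodule ℝ X) :
    (oOrtho ω P).map (S : X →ₗ[ℝ] Y) = oOrtho ω' (P.map (S : X →ₗ[ℝ] Y)) := by
  ext y
  constructor
  · rintro ⟨v, hv, rfl⟩ _ ⟨u, hu, rfl⟩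
    simpa [hS] using hv u hu
  · intro hy
    refine ⟨S.symm y, fun u hu => ?_, S.apply_symm_apply y⟩
    rw [← hS, S.apply_symm_apply]
    exact hy (S u) ⟨u, hu, rfl⟩

lemma prod_oOrtho_le_of_oOrtho_le (ωX : X →ₗ[ℝ] X →ₗ[ℝ] ℝ) (ωY : Y →ₗ[ℝ] Y →ₗ[ℝ] ℝ)
    {L : Submodule ℝ (X × Y)} (hL : oOrtho (prodForm ωX ωY) L ≤ L) :
    (oOrtho ωX (L.map (LinearMap.fst ℝ X Y))).prod (oOrtho ωY (L.map (LinearMap.snd ℝ X Y))) ≤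
      L := by
  rintro ⟨v, w⟩ ⟨hv, hw⟩
  refine hL fun p hp => ?_
  rw [prodForm_apply, hv p.1 (mem_map_of_mem hp), hw p.2 (mem_map_of_mem hp), sub_zero]

lemma exists_decomposition_of_mem (ωX : X →ₗ[ℝ] X →ₗ[ℝ] ℝ) (ωY : Y →ₗ[ℝ] Y →ₗ[ℝ] ℝ)
    {L : Submodule ℝ (X × Y)} (hL : oOrtho (prodForm ωX ωY) L ≤ L)
    {A₁ : Submodule ℝ X} {B₁ : Submodule ℝ Y}
    (hA : oOrtho ωX (L.map (LinearMap.fst ℝ X Y)) ⊔ A₁ = L.map (LinearMap.fst ℝ X Y))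
    (hB : oOrtho ωY (L.map (LinearMap.snd ℝ X Y)) ⊔ B₁ = L.map (LinearMap.snd ℝ X Y))
    {v : X} {w : Y} (hvw : (v, w) ∈ L) :
    ∃ v₀ ∈ oOrtho ωX (L.map (LinearMap.fst ℝ X Y)), ∃ v₁ ∈ A₁,
    ∃ w₀ ∈ oOrtho ωY (L.map (LinearMap.snd ℝ X Y)), ∃ w₁ ∈ B₁,
      v₀ + v₁ = v ∧ w₀ + w₁ = w ∧ (v₁, w₁) ∈ L := by
  obtain ⟨v₀, hv₀, v₁, hv₁, rfl⟩ := mem_sup.mp (hA ▸ mem_map_of_mem (f := LinearMap.fst ℝ X Y) hvw)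
  obtain ⟨w₀, hw₀, w₁, hw₁, rfl⟩ := mem_sup.mp (hB ▸ mem_map_of_mem (f := LinearMap.snd ℝ X Y) hvw)
  have h₀ : (v₀, w₀) ∈ L := prod_oOrtho_le_of_oOrtho_le ωX ωY hL ⟨hv₀, hw₀⟩
  refine ⟨v₀, hv₀, v₁, hv₁, w₀, hw₀, w₁, hw₁, rfl, rfl, ?_⟩
  simpa using L.sub_mem hvw h₀

lemma mem_iff_of_forall_mem_imp (ω : X →ₗ[ℝ] X →ₗ[ℝ] ℝ) (ω' : Y →ₗ[ℝ] Y →ₗ[ℝ] ℝ)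
    {L : Submodule ℝ (X × X)} (hL : oOrtho (prodForm ω ω) L ≤ L)
    {L' : Submodule ℝ (Y × Y)} (hL' : L' ≤ oOrtho (prodForm ω' ω') L')
    (S : X ≃ₗ[ℝ] Y) (hS : ∀ v u : X, ω' (S v) (S u) = ω v u)
    (hmaps : ∀ v w : X, (v, w) ∈ L → (S v, S w) ∈ L') (v w : X) :
    (v, w) ∈ L ↔ (S v, S w) ∈ L' := by
  refine ⟨hmaps v w, fun h => hL fun ⟨u, u'⟩ hu => ?_⟩
  simpa [prodForm_apply, hS] using hL' h _ (hmaps u u' hu)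

lemma map_map_fst_of_forall_mem_iff (S : X ≃ₗ[ℝ] Y) {L : Submodule ℝ (X × X)}
    {L' : Submodule ℝ (Y × Y)} (h : ∀ v w : X, (v, w) ∈ L ↔ (S v, S w) ∈ L') :
    (L.map (LinearMap.fst ℝ X X)).map (S : X →ₗ[ℝ] Y) = L'.map (LinearMap.fst ℝ Y Y) := by
  ext y
  constructor
  · rintro ⟨_, ⟨⟨a, b⟩, hab, rfl⟩, rfl⟩
    exact ⟨(S a, S b), (h a b).1 hab, rfl⟩
  · rintro ⟨⟨a, b⟩, hab, rfl⟩
    exact ⟨S.symm a, ⟨(S.symm a, S.symm b), (h _ _).2 (by simpa using hab), rfl⟩, by simp⟩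

lemma map_map_snd_of_forall_mem_iff (S : X ≃ₗ[ℝ] Y) {L : Submodule ℝ (X × X)}
    {L' : Submodule ℝ (Y × Y)} (h : ∀ v w : X, (v, w) ∈ L ↔ (S v, S w) ∈ L') :
    (L.map (LinearMap.snd ℝ X X)).map (S : X →ₗ[ℝ] Y) = L'.map (LinearMap.snd ℝ Y Y) := by
  ext y
  constructor
  · rintro ⟨_, ⟨⟨a, b⟩, hab, rfl⟩, rfl⟩
    exact ⟨(S a, S b), (h a b).1 hab, rfl⟩
  · rintro ⟨⟨a, b⟩, hab, rfl⟩
    exact ⟨S.symm b, ⟨(S.symm a, S.symm b), (h _ _).2 (by simpa using hab), rfl⟩, by simp⟩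

end CanonicalRelation

theorem stmt15_general
    {V W : Type*} [AddCommGroup V] [Module ℝ V]
    [AddCommGroup W] [Module ℝ W]
    (ω : V →ₗ[ℝ] V →ₗ[ℝ] ℝ)
    (ω' : W →ₗ[ℝ] W →ₗ[ℝ] ℝ)
    (L : Submodule ℝ (V × V)) (hL : L = oOrtho (prodForm ω ω) L)
    (L' : Submodule ℝ (W × W)) (hL' : L' = oOrtho (prodForm ω' ω') L')
    (A₁ B₁ : Submodule ℝ V)
    -- A = A^ω ⊕ A₁
    (hA₂ : oOrtho ω (Submodule.map (LinearMap.fst ℝ V V) L) ⊔ A₁ =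
      Submodule.map (LinearMap.fst ℝ V V) L)
    -- B = B^ω ⊕ B₁
    (hB₂ : oOrtho ω (Submodule.map (LinearMap.snd ℝ V V) L) ⊔ B₁ =
      Submodule.map (LinearMap.snd ℝ V V) L)
    -- the induced linear symplectomorphism φ_L : A₁ → B₁ of L
    (φL : A₁ →ₗ[ℝ] V) (hφLran : ∀ v₁ : A₁, φL v₁ ∈ B₁)
    (hφL : ∀ (v₁ : A₁) (w₁ : V), w₁ ∈ B₁ → (((v₁ : V), w₁) ∈ L ↔ w₁ = φL v₁))
    -- a linear symplectomorphism S : V → V̂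
    (S : V ≃ₗ[ℝ] W) (hS : ∀ v u : V, ω' (S v) (S u) = ω v u) :
    -- S is an equivalence between L and L̂ iff (i) and (ii) hold
    (∀ v w : V, (v, w) ∈ L ↔ (S v, S w) ∈ L') ↔
      ((Submodule.map (S : V →ₗ[ℝ] W) (oOrtho ω (Submodule.map (LinearMap.fst ℝ V V) L)) =
          oOrtho ω' (Submodule.map (LinearMap.fst ℝ W W) L') ∧
        Submodule.map (S : V →ₗ[ℝ] W) (oOrtho ω (Submodule.map (LinearMap.snd ℝ V V) L)) =
          oOrtho ω' (Submodule.map (LinearMap.snd ℝ W W) L')) ∧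
       (∀ v₁ : A₁, (S (v₁ : V), S (φL v₁)) ∈ L')) := by
  constructor
  · intro hSL
    refine ⟨⟨?_, ?_⟩, fun v₁ => (hSL _ _).1 ((hφL v₁ _ (hφLran v₁)).2 rfl)⟩
    · rw [map_oOrtho ω ω' S hS, map_map_fst_of_forall_mem_iff S hSL]
    · rw [map_oOrtho ω ω' S hS, map_map_snd_of_forall_mem_iff S hSL]
  · rintro ⟨⟨hA, hB⟩, hφ⟩
    refine mem_iff_of_forall_mem_imp ω ω' hL.ge hL'.le S hS fun v w hvw => ?_
    obtain ⟨v₀, hv₀, v₁, hv₁, w₀, hw₀, w₁, hw₁, rfl, rfl, h₁⟩ :=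
      exists_decomposition_of_mem ω ω hL.ge hA₂ hB₂ hvw
    have h₀ : (S v₀, S w₀) ∈ L' := prod_oOrtho_le_of_oOrtho_le ω' ω' hL'.ge
      ⟨hA ▸ mem_map_of_mem hv₀, hB ▸ mem_map_of_mem hw₀⟩
    rw [(hφL ⟨v₁, hv₁⟩ w₁ hw₁).1 h₁, map_add, map_add]
    exact L'.add_mem h₀ (hφ ⟨v₁, hv₁⟩)

/-- a linear symplectomorphism `S : V → V̂` is an equivalence between
linear canonical relations `L` and `L̂` iff (i) `S(A^ω) = Â^ω̂` and `S(B^ω) = B̂^ω̂`, and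
(ii) `(S v₁, S (φ_L v₁)) ∈ L̂` for every `v₁ ∈ A₁`, where `φ_L : A₁ → B₁` is the induced
symplectomorphism of `L`. -/
theorem stmt15
    {V W : Type*} [AddCommGroup V] [Module ℝ V] [FiniteDimensional ℝ V]
    [AddCommGroup W] [Module ℝ W] [FiniteDimensional ℝ W]
    (ω : V →ₗ[ℝ] V →ₗ[ℝ] ℝ) (hωalt : ω.IsAlt) (hωnd : ω.Nondegenerate)
    (ω' : W →ₗ[ℝ] W →ₗ[ℝ] ℝ) (hω'alt : ω'.IsAlt) (hω'nd : ω'.Nondegenerate)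
    (L : Submodule ℝ (V × V)) (hL : L = oOrtho (prodForm ω ω) L)
    (L' : Submodule ℝ (W × W)) (hL' : L' = oOrtho (prodForm ω' ω') L')
    (A₁ B₁ : Submodule ℝ V)
    -- A = A^ω ⊕ A₁
    (hA₁ : oOrtho ω (Submodule.map (LinearMap.fst ℝ V V) L) ⊓ A₁ = ⊥)
    (hA₂ : oOrtho ω (Submodule.map (LinearMap.fst ℝ V V) L) ⊔ A₁ =
      Submodule.map (LinearMap.fst ℝ V V) L)
    -- B = B^ω ⊕ B₁
    (hB₁ : oOrtho ω (Submodule.map (LinearMap.snd ℝ V V) L) ⊓ B₁ = ⊥)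
    (hB₂ : oOrtho ω (Submodule.map (LinearMap.snd ℝ V V) L) ⊔ B₁ =
      Submodule.map (LinearMap.snd ℝ V V) L)
    -- the induced linear symplectomorphism φ_L : A₁ → B₁ of L
    (φL : A₁ →ₗ[ℝ] V) (hφLran : ∀ v₁ : A₁, φL v₁ ∈ B₁)
    (hφL : ∀ (v₁ : A₁) (w₁ : V), w₁ ∈ B₁ → (((v₁ : V), w₁) ∈ L ↔ w₁ = φL v₁))
    -- a linear symplectomorphism S : V → V̂
    (S : V ≃ₗ[ℝ] W) (hS : ∀ v u : V, ω' (S v) (S u) = ω v u) :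
    -- S is an equivalence between L and L̂ iff (i) and (ii) hold
    (∀ v w : V, (v, w) ∈ L ↔ (S v, S w) ∈ L') ↔
      ((Submodule.map (S : V →ₗ[ℝ] W) (oOrtho ω (Submodule.map (LinearMap.fst ℝ V V) L)) =
          oOrtho ω' (Submodule.map (LinearMap.fst ℝ W W) L') ∧
        Submodule.map (S : V →ₗ[ℝ] W) (oOrtho ω (Submodule.map (LinearMap.snd ℝ V V) L)) =
          oOrtho ω' (Submodule.map (LinearMap.snd ℝ W W) L')) ∧
       (∀ v₁ : A₁, (S (v₁ : V), S (φL v₁)) ∈ L')) :=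
  stmt15_general ω ω' L hL L' hL' A₁ B₁ hA₂ hB₂ φL hφLran hφL S hS
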